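/- Key estimate for E-mixing of the Boolean shift: let i, j ∈ {#} ∪ ℤ with (i, j) ≠ (#, #), let A = ⟨·, e_i⟩ e_j be the corresponding rank-one operator on Γ, and let l_1 < l_2 < ⋯ < l_n be natural numbers. Then ‖∑_{k=1}^{n} U^{l_k} A U^{−l_k}‖ ≤ √n in operator norm. -/

import Mathlib

/-!
Applied to `ζ`, the operator is `ζ ↦ ∑ₖ ⟪U^{lₖ} e_i, ζ⟫ U^{lₖ} e_j`. If `(vₖ)` has Bessel bound `β`
and `(wₖ)` has synthesis bound `α`, then `ζ ↦ ∑ₖ ⟪vₖ, ζ⟫ wₖ` has norm at most `√(αβ)`. The orbit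
`(U^{lₖ} e_a)ₖ` of a basis vector `e_a`, `a ∈ ℤ`, is orthonormal since the `lₖ` are distinct, so
both bounds are `1`; the orbit of `e_#` is constant, with both bounds `n`. As `(i, j) ≠ (#, #)`,
at most one of the two families is constant.
-/

open scoped InnerProductSpace ComplexOrder
open ContinuousLinearMap Filter

noncomputable section

/-- The Boolean Fock space `Γ = ℓ²({#} ∪ ℤ)`, concretely `ℓ²(Option ℤ)` (with `none`
playing the role of `#`). -/
abbrev BF : Type := lp (fun _ : Option ℤ => ℂ) 2

/-- The canonical orthonormal basis: `eb none = e_#` and `eb (some j) = e_j`. -/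
noncomputable def eb (i : Option ℤ) : BF := lp.single 2 i 1

/-- The rank-one orthogonal projection `P_#` onto `ℂ e_#`. -/
noncomputable def Psharp : BF →L[ℂ] BF := (innerSL ℂ (eb none)).smulRight (eb none)

/-- Membership in the Boolean C*-algebra `𝔟 = K(Γ) + ℂI`. -/
def MemBoole (X : BF →L[ℂ] BF) : Prop :=
  ∃ (A : BF →L[ℂ] BF) (b : ℂ), IsCompactOperator ⇑A ∧ X = A + b • (1 : BF →L[ℂ] BF)

/-- `U` is the unitary implementing the shift: `U e_# = e_#`, `U e_j = e_{j+1}`. -/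
def IsBooleShift (U : BF →L[ℂ] BF) : Prop :=
  U (eb none) = eb none ∧ ∀ j : ℤ, U (eb (some j)) = eb (some (j + 1))

/-- `V g` is the unitary implementing the permutation `g`: `V g e_# = e_#`,
`V g e_j = e_{g j}`. -/
def IsBoolePermAction (V : Equiv.Perm ℤ → (BF →L[ℂ] BF)) : Prop :=
  ∀ g : Equiv.Perm ℤ, V g (eb none) = eb none ∧
    ∀ j : ℤ, V g (eb (some j)) = eb (some (g j))

/-- A permutation of `ℤ` is finitely supported if it moves only finitely many points. -/
def FinSupported (g : Equiv.Perm ℤ) : Prop := {j : ℤ | g j ≠ j}.Finite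

section BesselFamilies

variable (𝕜 : Type*) {E ι : Type*} [RCLike 𝕜] [NormedAddCommGroup E] [InnerProductSpace 𝕜 E]
  [Fintype ι]

def IsBesselFamily (v : ι → E) (B : ℝ) : Prop :=
  ∀ x : E, ∑ k, ‖⟪v k, x⟫_𝕜‖ ^ 2 ≤ B * ‖x‖ ^ 2

def HasSynthesisBound (w : ι → E) (B : ℝ) : Prop :=
  ∀ c : ι → 𝕜, ‖∑ k, c k • w k‖ ^ 2 ≤ B * ∑ k, ‖c k‖ ^ 2

variable {𝕜}

theorem Orthonormal.isBesselFamily {v : ι → E} (hv : Orthonormal 𝕜 v) :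
    IsBesselFamily 𝕜 v 1 := fun x => by
  simpa using hv.sum_inner_products_le x

theorem Orthonormal.hasSynthesisBound {w : ι → E} (hw : Orthonormal 𝕜 w) :
    HasSynthesisBound 𝕜 w 1 := fun c => by
  simpa using (hw.orthogonalFamily.norm_sum c Finset.univ).le

theorem isBesselFamily_const {e : E} (he : ‖e‖ ≤ 1) :
    IsBesselFamily 𝕜 (fun _ : ι => e) (Fintype.card ι) := fun x => by
  have h : ‖⟪e, x⟫_𝕜‖ ≤ ‖x‖ :=
    (norm_inner_le_norm e x).trans (mul_le_of_le_one_left (norm_nonneg x) he)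
  rw [Finset.sum_const, Finset.card_univ, nsmul_eq_mul]
  gcongr

theorem hasSynthesisBound_const {e : E} (he : ‖e‖ ≤ 1) :
    HasSynthesisBound 𝕜 (fun _ : ι => e) (Fintype.card ι) := fun c => by
  rw [← Finset.sum_smul, norm_smul]
  calc (‖∑ k, c k‖ * ‖e‖) ^ 2 ≤ (∑ k, ‖c k‖) ^ 2 := by
        gcongr
        exact (mul_le_of_le_one_right (norm_nonneg _) he).trans (norm_sum_le _ _)
    _ ≤ Fintype.card ι * ∑ k, ‖c k‖ ^ 2 := sq_sum_le_card_mul_sum_sq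

theorem HasSynthesisBound.norm_sum_inner_smul_le {v w : ι → E} {α β : ℝ}
    (hw : HasSynthesisBound 𝕜 w α) (hv : IsBesselFamily 𝕜 v β) (hα : 0 ≤ α) (x : E) :
    ‖∑ k, ⟪v k, x⟫_𝕜 • w k‖ ≤ Real.sqrt (α * β) * ‖x‖ := by
  rw [← Real.sqrt_sq (norm_nonneg x), ← Real.sqrt_mul' _ (sq_nonneg _)]
  refine Real.le_sqrt_of_sq_le ?_
  calc ‖∑ k, ⟪v k, x⟫_𝕜 • w k‖ ^ 2 ≤ α * ∑ k, ‖⟪v k, x⟫_𝕜‖ ^ 2 := hw _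
    _ ≤ α * (β * ‖x‖ ^ 2) := by gcongr; exact hv x
    _ = α * β * ‖x‖ ^ 2 := (mul_assoc _ _ _).symm

theorem sum_mul_smulRight_mul_adjoint_apply [CompleteSpace E] (T : ι → E →L[𝕜] E) (v w x : E) :
    (∑ k, T k * (innerSL 𝕜 v).smulRight w * adjoint (T k)) x = ∑ k, ⟪T k v, x⟫_𝕜 • T k w := by
  simp [sum_apply, adjoint_inner_right]

end BesselFamilies

theorem orthonormal_eb : Orthonormal ℂ eb := by
  classical
  rw [orthonormal_iff_ite]
  intro a b
  simp [eb, lp.inner_single_left, lp.single_apply, Pi.single_apply]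

theorem orthonormal_eb_some_add {ι : Type*} {l : ι → ℕ} (hl : Function.Injective l) (a : ℤ) :
    Orthonormal ℂ fun k => eb (some (a + l k)) :=
  orthonormal_eb.comp _ fun x y h => hl (by simpa using h)

namespace IsBooleShift

variable {U : BF →L[ℂ] BF} (hU : IsBooleShift U)
include hU

theorem pow_apply_eb_none (m : ℕ) : (U ^ m) (eb none) = eb none := by
  induction m with
  | zero => rfl
  | succ m ih => rw [pow_succ, mul_apply_eq_comp, hU.1, ih]

theorem pow_apply_eb_some (m : ℕ) (j : ℤ) : (U ^ m) (eb (some j)) = eb (some (j + m)) := by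
  induction m generalizing j with
  | zero => simp
  | succ m ih =>
    rw [pow_succ, mul_apply_eq_comp, hU.2 j, ih]
    push_cast
    ring_nf

end IsBooleShift

/-- Key estimate for `E`-mixing of the Boolean shift (from Proposition 6.2): for
`i, j ∈ {#} ∪ ℤ` with `(i,j) ≠ (#,#)`, the rank-one operator `A = ⟨·, e_i⟩ e_j`, and
natural numbers `l_1 < l_2 < ⋯ < l_n`, one has `‖∑_{k=1}^n U^{l_k} A U^{−l_k}‖ ≤ √n`. -/
theorem boolean_shift_sqrt_estimate
    (U : BF →L[ℂ] BF) (hU : IsBooleShift U)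
    (i j : Option ℤ) (hij : ¬(i = none ∧ j = none))
    (n : ℕ) (l : Fin n → ℕ) (hl : StrictMono l) :
    ‖∑ k : Fin n, U ^ (l k) * (innerSL ℂ (eb i)).smulRight (eb j) *
        ContinuousLinearMap.adjoint (U ^ (l k))‖ ≤ Real.sqrt n := by
  obtain rfl | hn := n.eq_zero_or_pos
  · simp
  have hnorm : ‖eb none‖ ≤ 1 := (orthonormal_eb.1 none).le
  refine opNorm_le_bound _ (Real.sqrt_nonneg _) fun ζ => ?_
  rw [sum_mul_smulRight_mul_adjoint_apply]
  rcases i with _ | a <;> rcases j with _ | b <;>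
    simp only [hU.pow_apply_eb_none, hU.pow_apply_eb_some]
  · exact absurd ⟨rfl, rfl⟩ hij
  · simpa using (orthonormal_eb_some_add hl.injective b).hasSynthesisBound.norm_sum_inner_smul_le
      (isBesselFamily_const hnorm) zero_le_one ζ
  · simpa using (hasSynthesisBound_const hnorm).norm_sum_inner_smul_le
      (orthonormal_eb_some_add hl.injective a).isBesselFamily (Nat.cast_nonneg _) ζ
  · calc _ ≤ Real.sqrt (1 * 1) * ‖ζ‖ :=
          (orthonormal_eb_some_add hl.injective b).hasSynthesisBound.norm_sum_inner_smul_le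
            (orthonormal_eb_some_add hl.injective a).isBesselFamily zero_le_one ζ
      _ ≤ Real.sqrt n * ‖ζ‖ := by gcongr; exact_mod_cast hn
end
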